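/- For θ1 ≠ θ2, the two determinantal representations M = [[x, 0, −z], [y, x − θ1 y, 0], [0, z, x − θ2 y]] and M' = [[x, 0, −z], [y, x − θ2 y, 0], [0, z, x − θ1 y]] of the Weierstrass cubic x(x+θ1 y)(x+θ2 y) − y z^2 are not equivalent: there exist no invertible 3×3 complex matrices P, Q with P·M·Q = M' as matrices of linear forms. -/
import Mathlib


open MvPolynomial

noncomputable def weierRep (θ1 θ2 : ℂ) : Matrix (Fin 3) (Fin 3) (MvPolynomial (Fin 3) ℂ) :=
  !![(X 0 : MvPolynomial (Fin 3) ℂ), 0, -X 2;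
     X 1, X 0 - C θ1 * X 1, 0;
     0, X 2, X 0 - C θ2 * X 1]

theorem stmt11 (θ1 θ2 : ℂ) (hθ : θ1 ≠ θ2) :
    ¬ ∃ P Q : Matrix (Fin 3) (Fin 3) ℂ, IsUnit P.det ∧ IsUnit Q.det ∧
      P.map C * weierRep θ1 θ2 * Q.map C = weierRep θ2 θ1 := by
  rintro ⟨P, Q, hP, hQ, h⟩
  -- evaluate the polynomial identity at the three coordinate points
  have key : ∀ v : Fin 3 → ℂ,
      P * (weierRep θ1 θ2).map (eval v) * Q = (weierRep θ2 θ1).map (eval v) := by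
    intro v
    have := congrArg (RingHom.mapMatrix (eval v : MvPolynomial (Fin 3) ℂ →+* ℂ)) h
    simpa [RingHom.mapMatrix_apply, Matrix.map_map, Function.comp_def] using this
  have hA : P * Q = 1 := by
    have := key ![1, 0, 0]
    have e1 : (weierRep θ1 θ2).map (eval ![1, 0, 0]) = (1 : Matrix (Fin 3) (Fin 3) ℂ) := by
      ext i j; fin_cases i <;> fin_cases j <;>
        simp [weierRep, Matrix.one_apply]
    have e2 : (weierRep θ2 θ1).map (eval ![1, 0, 0]) = (1 : Matrix (Fin 3) (Fin 3) ℂ) := by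
      ext i j; fin_cases i <;> fin_cases j <;>
        simp [weierRep, Matrix.one_apply]
    rw [e1, e2, Matrix.mul_one] at this
    exact this
  have hQP : Q * P = 1 := mul_eq_one_comm.mp hA
  set B : Matrix (Fin 3) (Fin 3) ℂ := !![0, 0, 0; 1, -θ1, 0; 0, 0, -θ2] with hBdef
  set B' : Matrix (Fin 3) (Fin 3) ℂ := !![0, 0, 0; 1, -θ2, 0; 0, 0, -θ1] with hB'def
  set Cm : Matrix (Fin 3) (Fin 3) ℂ := !![0, 0, -1; 0, 0, 0; 0, 1, 0] with hCmdef
  have hB : P * B = B' * P := by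
    have := key ![0, 1, 0]
    have e1 : (weierRep θ1 θ2).map (eval ![0, 1, 0]) = B := by
      ext i j; fin_cases i <;> fin_cases j <;> simp [weierRep, hBdef]
    have e2 : (weierRep θ2 θ1).map (eval ![0, 1, 0]) = B' := by
      ext i j; fin_cases i <;> fin_cases j <;> simp [weierRep, hB'def]
    rw [e1, e2] at this
    rw [← this, Matrix.mul_assoc (P * B) Q P, hQP, Matrix.mul_one]
  have hC : P * Cm = Cm * P := by
    have := key ![0, 0, 1]
    have e1 : (weierRep θ1 θ2).map (eval ![0, 0, 1]) = Cm := by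
      ext i j; fin_cases i <;> fin_cases j <;> simp [weierRep, hCmdef, Matrix.vecHead, Matrix.vecTail]
    have e2 : (weierRep θ2 θ1).map (eval ![0, 0, 1]) = Cm := by
      ext i j; fin_cases i <;> fin_cases j <;> simp [weierRep, hCmdef, Matrix.vecHead, Matrix.vecTail]
    rw [e1, e2] at this
    conv_rhs => rw [← this]
    rw [Matrix.mul_assoc (P * Cm) Q P, hQP, Matrix.mul_one]
  -- extract entries
  have hB00 := congrFun (congrFun hB 0) 0
  have hB20 := congrFun (congrFun hB 2) 0
  have hB22 := congrFun (congrFun hB 2) 2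
  have hC00 := congrFun (congrFun hC 0) 0
  have hC01 := congrFun (congrFun hC 0) 1
  have hC02 := congrFun (congrFun hC 0) 2
  simp [hBdef, hB'def, hCmdef, Matrix.mul_apply, Fin.sum_univ_three, Matrix.vecHead, Matrix.vecTail] at hB00 hB20 hB22 hC00 hC01 hC02
  -- hB00 : P 0 1 = 0 ;  hC00 : 0 = -P 2 0 ; hB20 : P 2 1 = -θ1 * P 2 0
  -- hC01 : P 0 2 = -P 2 1 ; hB22 : -θ2 * P 2 2 = -θ1 * P 2 2 ; hC02 : -P 0 0 = -P 2 2
  have h20 : P 2 0 = 0 := hC00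
  have h21 : P 2 1 = 0 := by linear_combination hB20 - θ1 * h20
  have h02 : P 0 2 = 0 := by linear_combination hC01 - h21
  have h22 : P 2 2 = 0 := by
    have hsub : (θ1 - θ2) * P 2 2 = 0 := by linear_combination -hB22
    rcases mul_eq_zero.mp hsub with h | h
    · exact absurd (sub_eq_zero.mp h) hθ
    · exact h
  have h00 : P 0 0 = 0 := by linear_combination hC02 + h22
  have h01 : P 0 1 = 0 := hB00
  have hdet : P.det = 0 := by
    rw [Matrix.det_fin_three, h00, h01, h02]
    ring
  rw [hdet] at hP
  exact hP.ne_zero rfl
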